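/- (One-iteration result.) Suppose W satisfies w_{ij} = 1 for all j ≥ i and U := W − euᵀ is symmetric for some u ∈ ℝ^m. Suppose the iteration is performed: for each i, x_i^{k+1} minimizes over x_i the function ⟨∇_i f(x̂^{k,i}) − A_iᵀ(λ^k − β(Ax̂^{k,i} − b)), x_i⟩ + g_i(x_i) + (1/2)‖x_i − x_i^k‖_{P_i}², where x̂_j^{k,i} := x_j^{k+1} − w_{ij}(x_j^{k+1} − x_j^k), and λ^{k+1} := λ^k − ρ(Ax^{k+1} − b). Then for any α > 0 and any (x, λ) with Ax = b: F(x^{k+1}) − F(x) − ⟨λ, Ax^{k+1} − b⟩ + (1/(2ρ))(‖λ^{k+1} − λ‖² − ‖λ^k − λ‖²) + ((α−1)/(2α))‖H(x^{k+1} − x)‖² + ((β−ρ)/2 + β(α−1)/(2α))‖Ax^{k+1} − b‖² + (1/2)(‖x^{k+1} − x‖_P² − ‖x^k − x‖_P² + ‖x^{k+1} − x^k‖_P²) ≤ (1/2)(‖y^{k+1} − y‖_V² − ‖y^k − y‖_V² + ‖y^{k+1} − y^k‖_V²) + (α/2)‖Σ_i u_i(y_i^{k+1} − y_i^k)‖²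 + (β/2)(‖z^{k+1} − z‖_V² − ‖z^k − z‖_V² + ‖z^{k+1} − z^k‖_V²) + (βα/2)‖Σ_i u_i(z_i^{k+1} − z_i^k)‖². -/

import Mathlib

open Matrix Finset Filter Topology

/-- For a block matrix `M = (M_1,…,M_m)` and a block vector `x = (x_1,…,x_m)`,
`blkMulVec M x = Σ_i M_i x_i` (i.e. `Mx` for the concatenated matrix/vector). -/
noncomputable def blkMulVec {m r : ℕ} {n : Fin m → ℕ}
    (M : ∀ i : Fin m, Matrix (Fin r) (Fin (n i)) ℝ)
    (x : ∀ i : Fin m, Fin (n i) → ℝ) : Fin r → ℝ :=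
  ∑ i, M i *ᵥ x i

/-- The objective `F(x) = (1/2) xᵀQx + Σ_i g_i(x_i)` where `Q = HᵀH`,
so `F(x) = (1/2)‖Hx‖² + Σ_i g_i(x_i)`. -/
noncomputable def Fobj {m q : ℕ} {n : Fin m → ℕ}
    (H : ∀ i : Fin m, Matrix (Fin q) (Fin (n i)) ℝ)
    (g : ∀ i : Fin m, (Fin (n i) → ℝ) → ℝ)
    (x : ∀ i : Fin m, Fin (n i) → ℝ) : ℝ :=
  (1 / 2) * (blkMulVec H x ⬝ᵥ blkMulVec H x) + ∑ i, g i (x i)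

/-- `‖x‖_P²` for the block-diagonal matrix `P = blkdiag(P_1,…,P_m)`:
`‖x‖_P² = Σ_i x_iᵀ P_i x_i`. -/
noncomputable def normPSq {m : ℕ} {n : Fin m → ℕ}
    (P : ∀ i : Fin m, Matrix (Fin (n i)) (Fin (n i)) ℝ)
    (x : ∀ i : Fin m, Fin (n i) → ℝ) : ℝ :=
  ∑ i, x i ⬝ᵥ (P i *ᵥ x i)

/-- `‖y‖_V²` for a block vector `y = (y_1,…,y_m)`, where `V = U ⊗ I` with
`U := W − euᵀ` (so `U_{ij} = W_{ij} − u_j`): `‖y‖_V² = Σ_{i,j} U_{ij} ⟨y_i, y_j⟩`. -/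
noncomputable def normVSq {m r : ℕ} (W : Matrix (Fin m) (Fin m) ℝ) (u : Fin m → ℝ)
    (y : Fin m → Fin r → ℝ) : ℝ :=
  ∑ i, ∑ j, (W i j - u j) * (y i ⬝ᵥ y j)

/-- The quadratic form `v ↦ vᵀ D_Bᵀ (M ⊗ I) D_B v = Σ_{i,j} M_{ij} ⟨B_i v_i, B_j v_j⟩`
for a block-diagonal matrix `D_B = blkdiag(B_1,…,B_m)` and `M ∈ ℝ^{m×m}`. -/
noncomputable def quadKron {m r : ℕ} {n : Fin m → ℕ} (M : Matrix (Fin m) (Fin m) ℝ)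
    (B : ∀ i : Fin m, Matrix (Fin r) (Fin (n i)) ℝ)
    (v : ∀ i : Fin m, Fin (n i) → ℝ) : ℝ :=
  ∑ i, ∑ j, M i j * ((B i *ᵥ v i) ⬝ᵥ (B j *ᵥ v j))

/-- The point `x̂^{k,i}` with blocks `x̂_j^{k,i} = x_j^{k+1} − w_{ij}(x_j^{k+1} − x_j^k)`. -/
noncomputable def xhat {m : ℕ} {n : Fin m → ℕ} (W : Matrix (Fin m) (Fin m) ℝ)
    (xk xk1 : ∀ i : Fin m, Fin (n i) → ℝ) (i : Fin m) :
    ∀ j : Fin m, Fin (n j) → ℝ :=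
  fun j => xk1 j - W i j • (xk1 j - xk j)

/-- One iteration of the hybrid Jacobian/Gauss-Seidel proximal BCU method:
for each `i`, `x_i^{k+1}` minimizes
`⟨∇_i f(x̂^{k,i}) − A_iᵀ(λ^k − β(Ax̂^{k,i} − b)), x_i⟩ + g_i(x_i) + (1/2)‖x_i − x_i^k‖_{P_i}²`
(where `f(x) = (1/2)‖Hx‖²`, so `∇_i f(x̂) = H_iᵀ(Hx̂)`), and
`λ^{k+1} = λ^k − ρ(Ax^{k+1} − b)`. -/
noncomputable def Iter {m q p : ℕ} {n : Fin m → ℕ}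
    (H : ∀ i : Fin m, Matrix (Fin q) (Fin (n i)) ℝ)
    (A : ∀ i : Fin m, Matrix (Fin p) (Fin (n i)) ℝ)
    (b : Fin p → ℝ)
    (g : ∀ i : Fin m, (Fin (n i) → ℝ) → ℝ)
    (P : ∀ i : Fin m, Matrix (Fin (n i)) (Fin (n i)) ℝ)
    (W : Matrix (Fin m) (Fin m) ℝ)
    (β ρ : ℝ)
    (xk xk1 : ∀ i : Fin m, Fin (n i) → ℝ)
    (lamk lamk1 : Fin p → ℝ) : Prop :=
  (∀ i : Fin m, ∀ ξ : Fin (n i) → ℝ,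
      ((H i)ᵀ *ᵥ blkMulVec H (xhat W xk xk1 i)
          - (A i)ᵀ *ᵥ (lamk - β • (blkMulVec A (xhat W xk xk1 i) - b))) ⬝ᵥ xk1 i
        + g i (xk1 i)
        + (1 / 2) * ((xk1 i - xk i) ⬝ᵥ (P i *ᵥ (xk1 i - xk i)))
      ≤ ((H i)ᵀ *ᵥ blkMulVec H (xhat W xk xk1 i)
          - (A i)ᵀ *ᵥ (lamk - β • (blkMulVec A (xhat W xk xk1 i) - b))) ⬝ᵥ ξ
        + g i ξ
        + (1 / 2) * ((ξ - xk i) ⬝ᵥ (P i *ᵥ (ξ - xk i))))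
  ∧ lamk1 = lamk - ρ • (blkMulVec A xk1 - b)

/-!
Each proximal step gives, by convexity of `g_i` and symmetry of `P_i`, the first-order inequality
`⟨∇_i, x_i^{k+1} - x_i⟩ + g_i(x_i^{k+1}) - g_i(x_i) ≤ ⟨x_i - x_i^{k+1}, P_i (x_i^{k+1} - x_i^k)⟩`,
and the `P`-terms telescope by the three-point identity. The gradients are evaluated at the mixed
points `x̂^{k,i}`, which differ from `x^{k+1}` by `Σ_j w_ij (x_j^{k+1} - x_j^k)`. Since
`U = W - euᵀ` is symmetric, the resulting double sum
`Σ_ij w_ij ⟨y_j^{k+1} - y_j^k, y_i^{k+1} - y_i⟩` is a polarization of `‖·‖_V²` plus the cross term `⟨Σ_j u_j (y_j^{k+1} - y_j^k), H(x^{k+1} - x)⟩`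
(likewise for `z`), and Young's inequality with weight `α` absorbs the cross terms. The multiplier
update turns `⟨λ^k - λ, Ax^{k+1} - b⟩` into the telescoping `‖λ^k - λ‖²` terms.
-/

lemma nonpos_of_forall_le_mul {K S : ℝ}
    (h : ∀ t : ℝ, 0 < t → t ≤ 1 → K ≤ t * S) : K ≤ 0 := by
  have hlim : Tendsto (fun t : ℝ => t * S) (𝓝[>] 0) (𝓝 (0 * S)) :=
    (continuous_id.mul continuous_const).continuousWithinAt.tendsto
  refine ge_of_tendsto (by simpa using hlim) ?_
  filter_upwards [Ioc_mem_nhdsGT zero_lt_one] with t ht using h t ht.1 ht.2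

section Quadratic

variable {ι : Type*} [Fintype ι]

lemma dotProduct_mulVec_comm_of_isSymm {P : Matrix ι ι ℝ} (hP : P.IsSymm) (s t : ι → ℝ) :
    s ⬝ᵥ (P *ᵥ t) = t ⬝ᵥ (P *ᵥ s) := by
  rw [← dotProduct_transpose_mulVec, hP.eq]

lemma dotProduct_mulVec_three_point {P : Matrix ι ι ℝ} (hP : P.IsSymm) (x x0 x1 : ι → ℝ) :
    (x - x1) ⬝ᵥ (P *ᵥ (x1 - x0))
      = (1 / 2) * ((x0 - x) ⬝ᵥ (P *ᵥ (x0 - x)) - (x1 - x) ⬝ᵥ (P *ᵥ (x1 - x))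
          - (x1 - x0) ⬝ᵥ (P *ᵥ (x1 - x0))) := by
  simp only [mulVec_sub, dotProduct_sub, sub_dotProduct]
  linarith [dotProduct_mulVec_comm_of_isSymm hP x x0, dotProduct_mulVec_comm_of_isSymm hP x x1,
    dotProduct_mulVec_comm_of_isSymm hP x0 x1]

lemma dotProduct_le_young {α : ℝ} (hα : 0 < α) (s t : ι → ℝ) :
    s ⬝ᵥ t ≤ α / 2 * (s ⬝ᵥ s) + 1 / (2 * α) * (t ⬝ᵥ t) := by
  have hsq : 0 ≤ (α • s - t) ⬝ᵥ (α • s - t) := Finset.sum_nonneg fun _ _ => mul_self_nonneg _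
  have hexpand : (α • s - t) ⬝ᵥ (α • s - t)
      = 2 * α * (α / 2 * (s ⬝ᵥ s) + 1 / (2 * α) * (t ⬝ᵥ t) - s ⬝ᵥ t) := by
    simp only [sub_dotProduct, dotProduct_sub, smul_dotProduct, dotProduct_smul, smul_eq_mul,
      dotProduct_comm t s]
    field_simp
    ring
  rw [hexpand] at hsq
  linarith [nonneg_of_mul_nonneg_right hsq (by positivity)]

lemma ConvexOn.sub_le_of_forall_le_add_quadForm {φ : (ι → ℝ) → ℝ} (hφ : ConvexOn ℝ Set.univ φ)
    {P : Matrix ι ι ℝ} (hP : P.IsSymm) {x0 x1 : ι → ℝ}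
    (hmin : ∀ ξ, φ x1 + (1 / 2) * ((x1 - x0) ⬝ᵥ (P *ᵥ (x1 - x0)))
      ≤ φ ξ + (1 / 2) * ((ξ - x0) ⬝ᵥ (P *ᵥ (ξ - x0)))) (xs : ι → ℝ) :
    φ x1 - φ xs ≤ (xs - x1) ⬝ᵥ (P *ᵥ (x1 - x0)) := by
  set Δ := xs - x1
  suffices h : φ x1 - φ xs - Δ ⬝ᵥ (P *ᵥ (x1 - x0)) ≤ 0 by linarith
  -- compare with the points `x1 + t • Δ` of the segment and let `t → 0`
  refine nonpos_of_forall_le_mul (S := Δ ⬝ᵥ (P *ᵥ Δ) / 2) fun t ht0 ht1 => ?_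
  have hconv : φ (x1 + t • Δ) ≤ (1 - t) * φ x1 + t * φ xs := by
    have hseg : x1 + t • Δ = (1 - t) • x1 + t • xs := by
      simp only [Δ, smul_sub, sub_smul, one_smul]; abel
    rw [hseg]
    exact hφ.2 (Set.mem_univ _) (Set.mem_univ _) (by linarith) ht0.le (by ring)
  have hquad : (x1 + t • Δ - x0) ⬝ᵥ (P *ᵥ (x1 + t • Δ - x0))
      = (x1 - x0) ⬝ᵥ (P *ᵥ (x1 - x0)) + 2 * t * (Δ ⬝ᵥ (P *ᵥ (x1 - x0)))
        + t * t * (Δ ⬝ᵥ (P *ᵥ Δ)) := by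
    rw [add_sub_right_comm]
    simp only [mulVec_add, mulVec_smul, dotProduct_add, add_dotProduct, dotProduct_smul,
      smul_dotProduct, smul_eq_mul]
    linear_combination t * dotProduct_mulVec_comm_of_isSymm hP (x1 - x0) Δ
  have h := hmin (x1 + t • Δ)
  rw [hquad] at h
  have hscaled : t * (φ x1 - φ xs - Δ ⬝ᵥ (P *ᵥ (x1 - x0)))
      ≤ t * (t * (Δ ⬝ᵥ (P *ᵥ Δ) / 2)) := by
    linarith
  exact (mul_le_mul_iff_right₀ ht0).mp hscaled
lemma one_div_two_mul_dotProduct_self_sub_smul {ρ : ℝ} (hρ : ρ ≠ 0)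
    (l l' r : ι → ℝ) :
    1 / (2 * ρ) * ((l - ρ • r - l') ⬝ᵥ (l - ρ • r - l') - (l - l') ⬝ᵥ (l - l'))
      = l' ⬝ᵥ r - l ⬝ᵥ r + ρ / 2 * (r ⬝ᵥ r) := by
  rw [sub_right_comm]
  simp only [sub_dotProduct, dotProduct_sub, smul_dotProduct, dotProduct_smul, smul_eq_mul,
    dotProduct_comm r]
  field_simp
  ring

end Quadratic

section Blocks

variable {m r : ℕ} {n : Fin m → ℕ}

lemma blkMulVec_sub (M : ∀ i : Fin m, Matrix (Fin r) (Fin (n i)) ℝ)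
    (x x' : ∀ i : Fin m, Fin (n i) → ℝ) :
    blkMulVec M (x - x') = blkMulVec M x - blkMulVec M x' := by
  simp only [blkMulVec, Pi.sub_apply, mulVec_sub, Finset.sum_sub_distrib]

lemma blkMulVec_xhat (M : ∀ i : Fin m, Matrix (Fin r) (Fin (n i)) ℝ)
    (W : Matrix (Fin m) (Fin m) ℝ) (xk xk1 : ∀ i : Fin m, Fin (n i) → ℝ) (i : Fin m) :
    blkMulVec M (xhat W xk xk1 i)
      = blkMulVec M xk1 - ∑ j, W i j • (M j *ᵥ (xk1 j - xk j)) := by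
  simp only [blkMulVec, xhat, mulVec_sub, mulVec_smul, Finset.sum_sub_distrib]

lemma sum_transpose_mulVec_dotProduct (M : ∀ i : Fin m, Matrix (Fin r) (Fin (n i)) ℝ)
    (v : Fin r → ℝ) (d : ∀ i : Fin m, Fin (n i) → ℝ) :
    ∑ i, ((M i)ᵀ *ᵥ v) ⬝ᵥ d i = v ⬝ᵥ blkMulVec M d := by
  simp only [blkMulVec, dotProduct_sum, dotProduct_comm, dotProduct_transpose_mulVec]

lemma sum_sum_mul_dotProduct_eq_normVSq (W : Matrix (Fin m) (Fin m) ℝ) (u : Fin m → ℝ)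
    (hU : ∀ i j, W i j - u j = W j i - u i) (a δ : Fin m → Fin r → ℝ) :
    ∑ i, ∑ j, W i j * (δ j ⬝ᵥ a i)
      = (1 / 2) * (normVSq W u a - normVSq W u (a - δ) + normVSq W u δ)
        + (∑ j, u j • δ j) ⬝ᵥ ∑ i, a i := by
  have hpolar : normVSq W u a - normVSq W u (a - δ) + normVSq W u δ
      = ∑ i, ∑ j, (W i j - u j) * (δ j ⬝ᵥ a i) + ∑ i, ∑ j, (W i j - u j) * (δ i ⬝ᵥ a j) := by
    simp only [normVSq, ← Finset.sum_sub_distrib, ← Finset.sum_add_distrib, Pi.sub_apply,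
      sub_dotProduct, dotProduct_sub, dotProduct_comm (a _) (δ _)]
    refine Finset.sum_congr rfl fun i _ => Finset.sum_congr rfl fun j _ => ?_
    ring
  have hswap : ∑ i, ∑ j, (W i j - u j) * (δ i ⬝ᵥ a j)
      = ∑ i, ∑ j, (W i j - u j) * (δ j ⬝ᵥ a i) := by
    rw [Finset.sum_comm]
    simp only [hU]
  have hu : (∑ j, u j • δ j) ⬝ᵥ ∑ i, a i = ∑ i, ∑ j, u j * (δ j ⬝ᵥ a i) := by
    simp only [sum_dotProduct, dotProduct_sum, smul_dotProduct, smul_eq_mul]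
  rw [hpolar, hswap, hu]
  simp only [sub_mul, Finset.sum_sub_distrib]
  ring

lemma sum_transpose_mulVec_blkMulVec_xhat_dotProduct
    (M : ∀ i : Fin m, Matrix (Fin r) (Fin (n i)) ℝ) (W : Matrix (Fin m) (Fin m) ℝ)
    (u : Fin m → ℝ) (hU : ∀ i j, W i j - u j = W j i - u i)
    (xk xk1 x : ∀ i : Fin m, Fin (n i) → ℝ) :
    ∑ i, ((M i)ᵀ *ᵥ blkMulVec M (xhat W xk xk1 i)) ⬝ᵥ (xk1 i - x i)
      = blkMulVec M xk1 ⬝ᵥ blkMulVec M (xk1 - x)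
        - (1 / 2) * (normVSq W u ((fun i => M i *ᵥ xk1 i) - fun i => M i *ᵥ x i)
            - normVSq W u ((fun i => M i *ᵥ xk i) - fun i => M i *ᵥ x i)
            + normVSq W u ((fun i => M i *ᵥ xk1 i) - fun i => M i *ᵥ xk i))
        - (∑ i, u i • (M i *ᵥ xk1 i - M i *ᵥ xk i)) ⬝ᵥ blkMulVec M (xk1 - x) := by
  set a : Fin m → Fin r → ℝ := fun i => M i *ᵥ (xk1 i - x i)
  set δ : Fin m → Fin r → ℝ := fun j => M j *ᵥ (xk1 j - xk j)
  have ha : (fun i => M i *ᵥ xk1 i) - (fun i => M i *ᵥ x i) = a := by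
    ext1 i; simp [a, mulVec_sub]
  have hδ : (fun i => M i *ᵥ xk1 i) - (fun i => M i *ᵥ xk i) = δ := by
    ext1 i; simp [δ, mulVec_sub]
  have haδ : (fun i => M i *ᵥ xk i) - (fun i => M i *ᵥ x i) = a - δ := by
    ext1 i; simp [a, δ, mulVec_sub]
  have hsum : blkMulVec M (xk1 - x) = ∑ i, a i := rfl
  have hgrad : ∑ i, ((M i)ᵀ *ᵥ blkMulVec M (xhat W xk xk1 i)) ⬝ᵥ (xk1 i - x i)
      = blkMulVec M xk1 ⬝ᵥ ∑ i, a i - ∑ i, ∑ j, W i j * (δ j ⬝ᵥ a i) := by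
    rw [dotProduct_sum, ← Finset.sum_sub_distrib]
    refine Finset.sum_congr rfl fun i _ => ?_
    rw [dotProduct_comm, dotProduct_transpose_mulVec, blkMulVec_xhat, sub_dotProduct,
      sum_dotProduct]
    simp only [smul_dotProduct, smul_eq_mul]
    rfl
  rw [hgrad, sum_sum_mul_dotProduct_eq_normVSq W u hU a δ, ha, hδ, haδ, hsum]
  simp only [← mulVec_sub]
  ring

lemma Fobj_sub (H : ∀ i : Fin m, Matrix (Fin r) (Fin (n i)) ℝ)
    (g : ∀ i : Fin m, (Fin (n i) → ℝ) → ℝ) (x x' : ∀ i : Fin m, Fin (n i) → ℝ) :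
    Fobj H g x' - Fobj H g x
      = (∑ i, g i (x' i) - ∑ i, g i (x i)) + blkMulVec H x' ⬝ᵥ blkMulVec H (x' - x)
        - (1 / 2) * (blkMulVec H (x' - x) ⬝ᵥ blkMulVec H (x' - x)) := by
  simp only [Fobj, blkMulVec_sub, dotProduct_sub, sub_dotProduct,
    dotProduct_comm (blkMulVec H x) (blkMulVec H x')]
  ring

lemma sum_prox_optimality (c : ∀ i : Fin m, Fin (n i) → ℝ)
    (g : ∀ i : Fin m, (Fin (n i) → ℝ) → ℝ) (hg : ∀ i, ConvexOn ℝ Set.univ (g i))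
    (P : ∀ i : Fin m, Matrix (Fin (n i)) (Fin (n i)) ℝ) (hP : ∀ i, (P i).IsSymm)
    {xk xk1 : ∀ i : Fin m, Fin (n i) → ℝ}
    (hmin : ∀ i ξ, c i ⬝ᵥ xk1 i + g i (xk1 i)
        + (1 / 2) * ((xk1 i - xk i) ⬝ᵥ (P i *ᵥ (xk1 i - xk i)))
      ≤ c i ⬝ᵥ ξ + g i ξ + (1 / 2) * ((ξ - xk i) ⬝ᵥ (P i *ᵥ (ξ - xk i))))
    (x : ∀ i : Fin m, Fin (n i) → ℝ) :
    ∑ i, c i ⬝ᵥ (xk1 i - x i) + ∑ i, g i (xk1 i) - ∑ i, g i (x i)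
      ≤ (1 / 2) * (normPSq P (xk - x) - normPSq P (xk1 - x) - normPSq P (xk1 - xk)) := by
  have hblock : ∀ i, c i ⬝ᵥ (xk1 i - x i) + g i (xk1 i) - g i (x i)
      ≤ (x i - xk1 i) ⬝ᵥ (P i *ᵥ (xk1 i - xk i)) := fun i => by
    have hφ : ConvexOn ℝ Set.univ fun ξ => c i ⬝ᵥ ξ + g i ξ :=
      ((dotProductBilin ℝ ℝ (c i)).convexOn convex_univ).add (hg i)
    have h := hφ.sub_le_of_forall_le_add_quadForm (hP i) (hmin i) (x i)
    rw [dotProduct_sub]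
    linarith
  calc ∑ i, c i ⬝ᵥ (xk1 i - x i) + ∑ i, g i (xk1 i) - ∑ i, g i (x i)
      = ∑ i, (c i ⬝ᵥ (xk1 i - x i) + g i (xk1 i) - g i (x i)) := by
        rw [Finset.sum_sub_distrib, Finset.sum_add_distrib]
    _ ≤ ∑ i, (x i - xk1 i) ⬝ᵥ (P i *ᵥ (xk1 i - xk i)) := Finset.sum_le_sum fun i _ => hblock i
    _ = _ := by
        simp only [normPSq, Pi.sub_apply, ← Finset.sum_sub_distrib, Finset.mul_sum]
        exact Finset.sum_congr rfl fun i _ => dotProduct_mulVec_three_point (hP i) _ _ _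

end Blocks

lemma sum_sub_transpose_mulVec_dotProduct {m q p : ℕ} {n : Fin m → ℕ}
    (H : ∀ i : Fin m, Matrix (Fin q) (Fin (n i)) ℝ)
    (A : ∀ i : Fin m, Matrix (Fin p) (Fin (n i)) ℝ) (v : Fin m → Fin q → ℝ)
    (w : Fin m → Fin p → ℝ) (l b : Fin p → ℝ) (β : ℝ) (x' x : ∀ i : Fin m, Fin (n i) → ℝ) :
    ∑ i, ((H i)ᵀ *ᵥ v i - (A i)ᵀ *ᵥ (l - β • (w i - b))) ⬝ᵥ (x' i - x i)
      = ∑ i, ((H i)ᵀ *ᵥ v i) ⬝ᵥ (x' i - x i) + β * ∑ i, ((A i)ᵀ *ᵥ w i) ⬝ᵥ (x' i - x i)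
        - (l + β • b) ⬝ᵥ blkMulVec A (x' - x) := by
  rw [← sum_transpose_mulVec_dotProduct A _ (x' - x), Finset.mul_sum, ← Finset.sum_add_distrib,
    ← Finset.sum_sub_distrib]
  refine Finset.sum_congr rfl fun i _ => ?_
  simp only [Pi.sub_apply, mulVec_sub, mulVec_add, mulVec_smul, sub_dotProduct, add_dotProduct,
    smul_dotProduct, smul_eq_mul]
  ring

theorem stmt_8_general {m q p : ℕ} {n : Fin m → ℕ}
    (H : ∀ i : Fin m, Matrix (Fin q) (Fin (n i)) ℝ)
    (A : ∀ i : Fin m, Matrix (Fin p) (Fin (n i)) ℝ)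
    (b : Fin p → ℝ)
    (g : ∀ i : Fin m, (Fin (n i) → ℝ) → ℝ)
    (hg : ∀ i : Fin m, ConvexOn ℝ Set.univ (g i))
    (P : ∀ i : Fin m, Matrix (Fin (n i)) (Fin (n i)) ℝ)
    (hP : ∀ i : Fin m, (P i).PosSemidef)
    (W : Matrix (Fin m) (Fin m) ℝ) (u : Fin m → ℝ)
    (hU : ∀ i j : Fin m, W i j - u j = W j i - u i)       -- U := W − euᵀ symmetric
    (β ρ : ℝ) (hβ : 0 < β) (hρ : 0 < ρ)
    (xk xk1 : ∀ i : Fin m, Fin (n i) → ℝ) (lamk lamk1 : Fin p → ℝ)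
    (hiter : Iter H A b g P W β ρ xk xk1 lamk lamk1)
    (α : ℝ) (hα : 0 < α)
    (x : ∀ i : Fin m, Fin (n i) → ℝ) (lam : Fin p → ℝ)
    (hfeas : blkMulVec A x = b)
    (y yk yk1 : Fin m → Fin q → ℝ) (z zk zk1 : Fin m → Fin p → ℝ)
    (hy : y = fun i => H i *ᵥ x i) (hyk : yk = fun i => H i *ᵥ xk i)
    (hyk1 : yk1 = fun i => H i *ᵥ xk1 i)
    (hz : z = fun i => A i *ᵥ x i) (hzk : zk = fun i => A i *ᵥ xk i)
    (hzk1 : zk1 = fun i => A i *ᵥ xk1 i) :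
    Fobj H g xk1 - Fobj H g x - lam ⬝ᵥ (blkMulVec A xk1 - b)
      + (1 / (2 * ρ)) * ((lamk1 - lam) ⬝ᵥ (lamk1 - lam)
          - (lamk - lam) ⬝ᵥ (lamk - lam))
      + ((α - 1) / (2 * α)) *
          ((blkMulVec H (xk1 - x)) ⬝ᵥ (blkMulVec H (xk1 - x)))
      + ((β - ρ) / 2 + β * (α - 1) / (2 * α)) *
          ((blkMulVec A xk1 - b) ⬝ᵥ (blkMulVec A xk1 - b))
      + (1 / 2) * (normPSq P (xk1 - x) - normPSq P (xk - x)
          + normPSq P (xk1 - xk))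
    ≤ (1 / 2) * (normVSq W u (yk1 - y) - normVSq W u (yk - y)
          + normVSq W u (yk1 - yk))
      + (α / 2) * ((∑ i, u i • (yk1 i - yk i)) ⬝ᵥ (∑ i, u i • (yk1 i - yk i)))
      + (β / 2) * (normVSq W u (zk1 - z) - normVSq W u (zk - z)
          + normVSq W u (zk1 - zk))
      + (β * α / 2) *
          ((∑ i, u i • (zk1 i - zk i)) ⬝ᵥ (∑ i, u i • (zk1 i - zk i))) := by
  obtain ⟨hmin, rfl⟩ := hiter
  subst hy hyk hyk1 hz hzk hzk1
  have hres : blkMulVec A xk1 - b = blkMulVec A (xk1 - x) := by rw [blkMulVec_sub, hfeas]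
  have hAres : blkMulVec A xk1 ⬝ᵥ blkMulVec A (xk1 - x) - b ⬝ᵥ blkMulVec A (xk1 - x)
      = blkMulVec A (xk1 - x) ⬝ᵥ blkMulVec A (xk1 - x) := by rw [← sub_dotProduct, hres]
  have hprox := sum_prox_optimality _ g hg P
    (fun i => isHermitian_iff_isSymm.mp (hP i).isHermitian) hmin x
  rw [sum_sub_transpose_mulVec_dotProduct,
    sum_transpose_mulVec_blkMulVec_xhat_dotProduct H W u hU,
    sum_transpose_mulVec_blkMulVec_xhat_dotProduct A W u hU, add_dotProduct, smul_dotProduct,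
    smul_eq_mul] at hprox
  rw [Fobj_sub, one_div_two_mul_dotProduct_self_sub_smul hρ.ne', hres]
  have hyoungH := dotProduct_le_young hα (∑ i, u i • (H i *ᵥ xk1 i - H i *ᵥ xk i))
    (blkMulVec H (xk1 - x))
  have hyoungA := dotProduct_le_young hα (∑ i, u i • (A i *ᵥ xk1 i - A i *ᵥ xk i))
    (blkMulVec A (xk1 - x))
  have hcoefH : (α - 1) / (2 * α) = 1 / 2 - 1 / (2 * α) := by field_simp
  have hcoefA : β * (α - 1) / (2 * α) = β / 2 - β * (1 / (2 * α)) := by field_simp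
  rw [hcoefH, hcoefA]
  linear_combination hprox + hyoungH + β * hyoungA - β * hAres

/-- Proposition 2 (one-iteration result), inequality (16). -/
theorem stmt_8 {m q p : ℕ} {n : Fin m → ℕ}
    (H : ∀ i : Fin m, Matrix (Fin q) (Fin (n i)) ℝ)
    (A : ∀ i : Fin m, Matrix (Fin p) (Fin (n i)) ℝ)
    (b : Fin p → ℝ)
    (g : ∀ i : Fin m, (Fin (n i) → ℝ) → ℝ)
    (hg : ∀ i : Fin m, ConvexOn ℝ Set.univ (g i))
    (P : ∀ i : Fin m, Matrix (Fin (n i)) (Fin (n i)) ℝ)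
    (hP : ∀ i : Fin m, (P i).PosSemidef)
    (W : Matrix (Fin m) (Fin m) ℝ) (u : Fin m → ℝ)
    (hW : ∀ i j : Fin m, i ≤ j → W i j = 1)              -- w_{ij} = 1 for j ≥ i
    (hU : ∀ i j : Fin m, W i j - u j = W j i - u i)       -- U := W − euᵀ symmetric
    (β ρ : ℝ) (hβ : 0 < β) (hρ : 0 < ρ)
    (xk xk1 : ∀ i : Fin m, Fin (n i) → ℝ) (lamk lamk1 : Fin p → ℝ)
    (hiter : Iter H A b g P W β ρ xk xk1 lamk lamk1)
    (α : ℝ) (hα : 0 < α)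
    (x : ∀ i : Fin m, Fin (n i) → ℝ) (lam : Fin p → ℝ)
    (hfeas : blkMulVec A x = b)
    (y yk yk1 : Fin m → Fin q → ℝ) (z zk zk1 : Fin m → Fin p → ℝ)
    (hy : y = fun i => H i *ᵥ x i) (hyk : yk = fun i => H i *ᵥ xk i)
    (hyk1 : yk1 = fun i => H i *ᵥ xk1 i)
    (hz : z = fun i => A i *ᵥ x i) (hzk : zk = fun i => A i *ᵥ xk i)
    (hzk1 : zk1 = fun i => A i *ᵥ xk1 i) :
    Fobj H g xk1 - Fobj H g x - lam ⬝ᵥ (blkMulVec A xk1 - b)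
      + (1 / (2 * ρ)) * ((lamk1 - lam) ⬝ᵥ (lamk1 - lam)
          - (lamk - lam) ⬝ᵥ (lamk - lam))
      + ((α - 1) / (2 * α)) *
          ((blkMulVec H (xk1 - x)) ⬝ᵥ (blkMulVec H (xk1 - x)))
      + ((β - ρ) / 2 + β * (α - 1) / (2 * α)) *
          ((blkMulVec A xk1 - b) ⬝ᵥ (blkMulVec A xk1 - b))
      + (1 / 2) * (normPSq P (xk1 - x) - normPSq P (xk - x)
          + normPSq P (xk1 - xk))
    ≤ (1 / 2) * (normVSq W u (yk1 - y) - normVSq W u (yk - y)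
          + normVSq W u (yk1 - yk))
      + (α / 2) * ((∑ i, u i • (yk1 i - yk i)) ⬝ᵥ (∑ i, u i • (yk1 i - yk i)))
      + (β / 2) * (normVSq W u (zk1 - z) - normVSq W u (zk - z)
          + normVSq W u (zk1 - zk))
      + (β * α / 2) *
          ((∑ i, u i • (zk1 i - zk i)) ⬝ᵥ (∑ i, u i • (zk1 i - zk i))) :=
  stmt_8_general H A b g hg P hP W u hU β ρ hβ hρ xk xk1 lamk lamk1 hiter α hα x lam hfeas y yk yk1
    z zk zk1 hy hyk hyk1 hz hzk hzk1
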